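/- The function u(x,y,z,t) = 2/(1 + 2C e^{t-x}) satisfies the (3+1)-dimensional Zakharov–Kuznetsov equation u_t + u u_x + u_xx + u_yy + u_zz = 0 (with nonlinearity coefficient a = 1) for every real constant C. -/

import Mathlib

/-!
The solution is a travelling wave `u = f (t - x)` whose profile `f s = 2 / (1 + 2 C eˢ)` solves
the Riccati equation `f' = f² / 2 - f`. Differentiating once more gives `f'' = (f - 1) f'`, so the
equation reduces to `f' - f f' + f'' = f' (1 - f + (f - 1)) = 0`; the `y`- and `z`-terms vanish
because `u` does not depend on `y` and `z`.
-/

open Filter Topology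

noncomputable def zkProfile (C s : ℝ) : ℝ := 2 / (1 + 2 * C * Real.exp s)

lemma hasDerivAt_zkProfile {C s : ℝ} (hs : 1 + 2 * C * Real.exp s ≠ 0) :
    HasDerivAt (zkProfile C) (zkProfile C s ^ 2 / 2 - zkProfile C s) s := by
  have hden : HasDerivAt (fun r => 1 + 2 * C * Real.exp r) (2 * C * Real.exp s) s := by
    simpa using ((Real.hasDerivAt_exp s).const_mul (2 * C)).const_add 1
  refine ((hasDerivAt_const s (2 : ℝ)).fun_div hden hs).congr_deriv ?_
  rw [zkProfile]
  field_simp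
  ring

lemma eventually_hasDerivAt_zkProfile {C s : ℝ} (hs : 1 + 2 * C * Real.exp s ≠ 0) :
    ∀ᶠ r in 𝓝 s, HasDerivAt (zkProfile C) (zkProfile C r ^ 2 / 2 - zkProfile C r) r := by
  have hcont : Continuous fun r => 1 + 2 * C * Real.exp r := by fun_prop
  filter_upwards [hcont.continuousAt.eventually_ne hs] with r hr
  exact hasDerivAt_zkProfile hr

section Riccati

variable {f : ℝ → ℝ} {s : ℝ}

lemma deriv_deriv_of_riccati (h : ∀ᶠ r in 𝓝 s, HasDerivAt f (f r ^ 2 / 2 - f r) r) :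
    deriv (deriv f) s = (f s - 1) * deriv f s := by
  have hf : HasDerivAt f (f s ^ 2 / 2 - f s) s := h.self_of_nhds
  have hderiv : deriv f =ᶠ[𝓝 s] fun r => f r ^ 2 / 2 - f r := h.mono fun r hr => hr.deriv
  have hrhs : HasDerivAt (fun r => f r ^ 2 / 2 - f r)
      ((2 * f s * (f s ^ 2 / 2 - f s)) / 2 - (f s ^ 2 / 2 - f s)) s := by
    simpa using ((hf.fun_pow 2).div_const 2).fun_sub hf
  rw [hderiv.deriv_eq, hrhs.deriv, hf.deriv]
  ring

lemma travelingWave_of_riccati {x t : ℝ}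
    (h : ∀ᶠ r in 𝓝 (t - x), HasDerivAt f (f r ^ 2 / 2 - f r) r) :
    deriv (fun t' => f (t' - x)) t + f (t - x) * deriv (fun x' => f (t - x')) x
      + deriv (deriv fun x' => f (t - x')) x = 0 := by
  have hux : deriv (fun x' => f (t - x')) = fun x' => -deriv f (t - x') :=
    funext fun x' => deriv_comp_const_sub f t x'
  rw [deriv_comp_sub_const, hux, deriv.fun_neg, deriv_comp_const_sub, neg_neg,
    deriv_deriv_of_riccati h]
  ring

end Riccati

/-- The function `u(x,y,z,t) = 2/(1 + 2C e^{t-x})` solves the (3+1)-dimensional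
Zakharov–Kuznetsov equation `u_t + u u_x + u_xx + u_yy + u_zz = 0` (with `a = 1`),
for every real constant `C`, at every point where the denominator is nonzero. -/
theorem stmt0 (C : ℝ)
    (u : ℝ → ℝ → ℝ → ℝ → ℝ)
    (hu : ∀ x y z t, u x y z t = 2 / (1 + 2 * C * Real.exp (t - x))) :
    ∀ x y z t, 1 + 2 * C * Real.exp (t - x) ≠ 0 →
      deriv (fun t' => u x y z t') t
        + u x y z t * deriv (fun x' => u x' y z t) x
        + deriv (deriv (fun x' => u x' y z t)) x
        + deriv (deriv (fun y' => u x y' z t)) y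
        + deriv (deriv (fun z' => u x y z' t)) z = 0 := by
  intro x y z t hden
  obtain rfl : u = fun x _ _ t => zkProfile C (t - x) := by
    funext x y z t
    exact hu x y z t
  simp only [deriv_const', deriv_const, add_zero]
  exact travelingWave_of_riccati (eventually_hasDerivAt_zkProfile hden)
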